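/- Let d ≥ 1 be odd. Then the affine hull of P_{∂σ_{d+1}} = conv(columns of L), where L_{ii} = d+1 and L_{ij} = (-1)^{i+j-1} for i ≠ j, equals { x ∈ ℝ^{d+2} : Σ_{k odd} x_k − Σ_{k even} x_k = 0 }. -/

import Mathlib

/-!
Write `ε i = (-1)^i`. Then `L = (d+2) • 1 - ε εᵀ` and `ε ⬝ᵥ ε = d+2`, so every column
`(d+2) eⱼ - εⱼ ε` of `L` is orthogonal to `ε`. Conversely, if `ε ⬝ᵥ x = 0` then `L w = x` for
`w = (d+2)⁻¹ x + c ε` whatever `c` is; as `∑ εᵢ = 1` for odd `d`, `c` can be chosen so that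
`∑ wᵢ = 1`, which exhibits `x` as an affine combination of the columns.
-/

open Matrix

/-- The `d`-th Laplacian matrix of the boundary of the `(d+1)`-simplex:
`L_{ii} = d+1` and `L_{ij} = (-1)^{i+j-1}` for `i ≠ j` (1-indexed; here 0-indexed,
so the sign is `(-1)^{i+j+1}`). -/
def lap (d : ℕ) : Matrix (Fin (d+2)) (Fin (d+2)) ℝ :=
  Matrix.of fun i j => if i = j then (d+1 : ℝ) else (-1 : ℝ)^((i:ℕ)+(j:ℕ)+1)

section SmulOneSubVecMulVec

variable {ι K : Type*} [DecidableEq ι] [Field K]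

theorem transpose_smul_one_sub_vecMulVec_apply (a : K) (v : ι → K) (j : ι) :
    (a • (1 : Matrix ι ι K) - vecMulVec v v)ᵀ j = a • Pi.single j 1 - v j • v := by
  ext i
  by_cases h : i = j
  · subst h; simp [vecMulVec_apply]
  · simp [vecMulVec_apply, one_apply, h, mul_comm]

variable [Fintype ι]

theorem sum_smul_transpose_smul_one_sub_vecMulVec (a : K) (v w : ι → K) :
    ∑ j, w j • (a • (1 : Matrix ι ι K) - vecMulVec v v)ᵀ j = a • w - (v ⬝ᵥ w) • v := by
  simp only [transpose_smul_one_sub_vecMulVec_apply, smul_sub, Finset.sum_sub_distrib, smul_smul,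
    ← Finset.sum_smul]
  congr 1
  · ext i; simp [Finset.sum_apply, Pi.single_apply, mul_comm]
  · simp [dotProduct, mul_comm]

theorem affineSpan_range_transpose_smul_one_sub_vecMulVec {a : K} {v : ι → K}
    (hvv : v ⬝ᵥ v = a) (ha : a ≠ 0) (hv : ∑ i, v i ≠ 0) :
    (affineSpan K (Set.range (a • (1 : Matrix ι ι K) - vecMulVec v v)ᵀ) : Set (ι → K)) =
      {x | v ⬝ᵥ x = 0} := by
  set M := a • (1 : Matrix ι ι K) - vecMulVec v v
  apply le_antisymm
  · change affineSpan K _ ≤ (LinearMap.ker (dotProductBilin K K v)).toAffineSubspace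
    rw [affineSpan_le]
    rintro _ ⟨j, rfl⟩
    simp [M, transpose_smul_one_sub_vecMulVec_apply, hvv, mul_comm]
  · intro x (hx : v ⬝ᵥ x = 0)
    set c := (1 - a⁻¹ * ∑ i, x i) / ∑ i, v i
    set w := a⁻¹ • x + c • v
    have hw : ∑ i, w i = 1 := by
      simp only [w, c, Pi.add_apply, Pi.smul_apply, smul_eq_mul, Finset.sum_add_distrib,
        ← Finset.mul_sum]
      field_simp; ring
    have hMw : Finset.univ.affineCombination K (fun j => Mᵀ j) w = x := by
      rw [Finset.affineCombination_eq_linear_combination _ _ _ hw,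
        sum_smul_transpose_smul_one_sub_vecMulVec]
      simp only [w, dotProduct_add, dotProduct_smul, hx, hvv, smul_add, smul_smul]
      simp [ha, mul_comm]
    exact hMw ▸ affineCombination_mem_affineSpan hw (fun j => Mᵀ j)

end SmulOneSubVecMulVec

def altSign (n : ℕ) : Fin n → ℝ := fun i => (-1) ^ (i : ℕ)

theorem altSign_dotProduct_self (n : ℕ) : altSign n ⬝ᵥ altSign n = n := by
  simp [altSign, dotProduct, ← pow_add, ← two_mul, pow_mul]

theorem sum_altSign_of_odd {n : ℕ} (hn : Odd n) : ∑ i, altSign n i = 1 := by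
  change ∑ i : Fin n, (-1 : ℝ) ^ (i : ℕ) = 1
  rw [Fin.sum_univ_eq_sum_range (fun i => (-1 : ℝ) ^ i), neg_one_geom_sum,
    if_neg (Nat.not_even_iff_odd.mpr hn)]

theorem altSign_dotProduct {n : ℕ} (x : Fin n → ℝ) :
    altSign n ⬝ᵥ x = (∑ k ∈ Finset.univ.filter fun k : Fin n => Odd ((k:ℕ)+1), x k) -
      (∑ k ∈ Finset.univ.filter fun k : Fin n => Even ((k:ℕ)+1), x k) := by
  have hsign (k : Fin n) : altSign n k * x k = if Odd ((k : ℕ) + 1) then x k else -x k := by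
    rcases Nat.even_or_odd (k : ℕ) with hk | hk
    · simp [altSign, hk.neg_one_pow, hk.add_one]
    · simp [altSign, hk.neg_one_pow, Nat.not_odd_iff_even.mpr hk.add_one]
  simp only [dotProduct, hsign, Finset.sum_ite, Finset.sum_neg_distrib, Nat.not_odd_iff_even,
    sub_eq_add_neg]

theorem lap_eq_smul_one_sub_vecMulVec (d : ℕ) :
    lap d = ((d + 2 : ℕ) : ℝ) • 1 - vecMulVec (altSign (d + 2)) (altSign (d + 2)) := by
  ext i j
  by_cases h : i = j
  · subst h; simp [lap, altSign, vecMulVec_apply, ← pow_add, ← two_mul, pow_mul]; ring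
  · simp [lap, altSign, vecMulVec_apply, one_apply, h, pow_succ, pow_add]

theorem stmt9_general (d : ℕ) (ho : Odd d) :
    (affineSpan ℝ (Set.range (lap d)ᵀ) : Set (Fin (d+2) → ℝ)) =
      {x | (∑ k ∈ Finset.univ.filter fun k : Fin (d+2) => Odd ((k:ℕ)+1), x k) -
           (∑ k ∈ Finset.univ.filter fun k : Fin (d+2) => Even ((k:ℕ)+1), x k) = 0} := by
  have hsum : ∑ i, altSign (d + 2) i ≠ 0 := by
    rw [sum_altSign_of_odd (ho.add_even even_two)]
    exact one_ne_zero
  rw [lap_eq_smul_one_sub_vecMulVec,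
    affineSpan_range_transpose_smul_one_sub_vecMulVec (altSign_dotProduct_self _) (by positivity)
      hsum]
  simp only [altSign_dotProduct]

/-- for odd `d ≥ 1`, the affine hull of
`P_{∂σ_{d+1}} = conv(columns of L)` equals
`{x ∈ ℝ^{d+2} : Σ_{k odd} x_k − Σ_{k even} x_k = 0}`, indices `k` being 1-indexed,
i.e. `k = (k:ℕ)+1` below. -/
theorem stmt9 (d : ℕ) (hd : 1 ≤ d) (ho : Odd d) :
    (affineSpan ℝ (Set.range (lap d)ᵀ) : Set (Fin (d+2) → ℝ)) =
      {x | (∑ k ∈ Finset.univ.filter fun k : Fin (d+2) => Odd ((k:ℕ)+1), x k) -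
           (∑ k ∈ Finset.univ.filter fun k : Fin (d+2) => Even ((k:ℕ)+1), x k) = 0} :=
  stmt9_general d ho
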